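/- Let ABCD be a convex quadrilateral in the Euclidean plane whose diagonals meet at a point O, where A, O, B are not collinear, and let φ = ∠AOB. Then dist A B + dist C D > (φ/π) · (dist A C + dist B D). -/

import Mathlib

open Real EuclideanGeometry

/-! By the law of cosines, in a triangle with sides `a, b` enclosing the angle `θ`, the third side
`c` satisfies `c² = (a - b)² + 4ab sin²(θ/2) ≥ (a + b)² sin²(θ/2)`. Applied to the triangles `AOB`
and `COD`, whose angles at `O` are vertical angles, and added up, this gives
`AB + CD ≥ (AC + BD) sin(φ/2)`; Jordan's inequality `sin(φ/2) > φ/π` finishes the proof. -/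

section

variable {V P : Type*} [NormedAddCommGroup V] [InnerProductSpace ℝ V] [MetricSpace P]
  [NormedAddTorsor V P]

lemma dist_sq_eq_sq_add_mul_sin_sq_half_angle (p q r : P) :
    dist p r ^ 2 =
      (dist p q - dist r q) ^ 2 + 4 * (dist p q * dist r q) * sin (∠ p q r / 2) ^ 2 := by
  rw [sin_sq_eq_half_sub, show 2 * (∠ p q r / 2) = ∠ p q r by ring, sq, law_cos p q r]
  ring

lemma dist_add_dist_mul_sin_half_angle_le (p q r : P) :
    (dist p q + dist r q) * sin (∠ p q r / 2) ≤ dist p r := by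
  have hsin_le : sin (∠ p q r / 2) ^ 2 ≤ 1 := sin_sq_le_one _
  have hsq : ((dist p q + dist r q) * sin (∠ p q r / 2)) ^ 2 ≤ dist p r ^ 2 := by
    rw [dist_sq_eq_sq_add_mul_sin_sq_half_angle p q r]
    nlinarith [sq_nonneg (dist p q - dist r q)]
  exact le_of_sq_le_sq hsq dist_nonneg

lemma dist_add_dist_mul_sin_half_angle_le_of_sbtw {A B C D O : P}
    (hAOC : Sbtw ℝ A O C) (hBOD : Sbtw ℝ B O D) :
    (dist A C + dist B D) * sin (∠ A O B / 2) ≤ dist A B + dist C D := by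
  have hvert : ∠ A O B = ∠ C O D :=
    angle_eq_angle_of_angle_eq_pi_of_angle_eq_pi hAOC.angle₁₂₃_eq_pi hBOD.angle₁₂₃_eq_pi
  have hAB := dist_add_dist_mul_sin_half_angle_le A O B
  have hCD := dist_add_dist_mul_sin_half_angle_le C O D
  rw [← hvert, dist_comm C O, dist_comm D O] at hCD
  rw [← hAOC.wbtw.dist_add_dist, ← hBOD.wbtw.dist_add_dist]
  linarith

end

lemma div_pi_lt_sin_half {φ : ℝ} (h0 : 0 < φ) (hπ : φ < π) : φ / π < sin (φ / 2) :=
  calc φ / π = 2 / π * (φ / 2) := by ring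
    _ < sin (φ / 2) := mul_lt_sin (by linarith) (by linarith)

/-- For a convex quadrilateral `ABCD` in the plane whose diagonals meet at `O`, with
`φ = ∠AOB`, one has `AB + CD > (φ/π)(AC + BD)`. -/
theorem diagonal_estimate_one (A B C D O : EuclideanSpace ℝ (Fin 2))
    (hAOC : Sbtw ℝ A O C) (hBOD : Sbtw ℝ B O D)
    (hncol : ¬ Collinear ℝ ({A, O, B} : Set (EuclideanSpace ℝ (Fin 2)))) :
    dist A B + dist C D > (∠ A O B / π) * (dist A C + dist B D) := by
  have hjordan := div_pi_lt_sin_half (angle_pos_of_not_collinear hncol)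
    (angle_lt_pi_of_not_collinear hncol)
  have hdiag : 0 < dist A C + dist B D :=
    add_pos (dist_pos.2 hAOC.left_ne_right) (dist_pos.2 hBOD.left_ne_right)
  calc ∠ A O B / π * (dist A C + dist B D)
      < sin (∠ A O B / 2) * (dist A C + dist B D) := mul_lt_mul_of_pos_right hjordan hdiag
    _ = (dist A C + dist B D) * sin (∠ A O B / 2) := mul_comm _ _
    _ ≤ dist A B + dist C D := dist_add_dist_mul_sin_half_angle_le_of_sbtw hAOC hBOD
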